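/- arXiv:1606.04365 — 2 statements merged into one kernel-verified Lean document; each statement's English description precedes it below -/
import Mathlib

section
/- If P is a symplectic orthogonal 2n×2n real matrix, then P can be written as P = exp(M) for some real matrix M satisfying MᵀJ + JM = 0 and Mᵀ + M = 0 (i.e., M is skew-symmetric and infinitesimally symplectic). -/
/-! An orthogonal `P` with `Pᵀ J P = J` commutes with `J`, the realification of `i • 1`; hence
`P` is the realification `[[A, -B], [B, A]]` of the complex matrix `U = A + iB`, and `U` is
unitary. The continuous functional calculus applied to a branch of `log` whose cut avoids the
finitely many eigenvalues of `U` gives a skew-Hermitian `S` with `exp S = U`. Realification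
commutes with `exp` and turns `Sᴴ` into a transpose, so the realification of `S` is
skew-symmetric and commutes with `J`, which makes it infinitesimally symplectic. -/

namespace Matrix

variable {m : Type*} [Fintype m] [DecidableEq m]

noncomputable def realify : Matrix m m ℂ →+* Matrix (m ⊕ m) (m ⊕ m) ℝ where
  toFun S := fromBlocks (S.map Complex.re) (-S.map Complex.im) (S.map Complex.im) (S.map Complex.re)
  map_one' := by
    ext (i | i) (j | j) <;> by_cases h : i = j <;> simp [one_apply, h]
  map_mul' S T := by
    ext (i | i) (j | j) <;>
      simp [mul_apply, Complex.mul_re, Complex.mul_im, Finset.sum_add_distrib, sub_eq_add_neg] <;>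
      ring
  map_zero' := by ext (i | i) (j | j) <;> simp
  map_add' S T := by ext (i | i) (j | j) <;> simp [add_comm]

theorem realify_eq_fromBlocks (S : Matrix m m ℂ) :
    realify S =
      fromBlocks (S.map Complex.re) (-S.map Complex.im) (S.map Complex.im) (S.map Complex.re) :=
  rfl

theorem realify_injective : Function.Injective (realify : Matrix m m ℂ → _) := by
  intro S T h
  ext i j
  refine Complex.ext ?_ ?_
  · simpa [realify_eq_fromBlocks] using congr_fun₂ h (.inl i) (.inl j)
  · simpa [realify_eq_fromBlocks] using congr_fun₂ h (.inr i) (.inl j)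

theorem transpose_realify (S : Matrix m m ℂ) : (realify S)ᵀ = realify Sᴴ := by
  ext (i | i) (j | j) <;> simp [realify_eq_fromBlocks]

theorem realify_I_smul_one :
    realify (Complex.I • 1 : Matrix m m ℂ) = fromBlocks 0 (-1) 1 0 := by
  ext (i | i) (j | j) <;> by_cases h : i = j <;> simp [realify_eq_fromBlocks, h]

theorem commute_fromBlocks_realify (S : Matrix m m ℂ) :
    Commute (fromBlocks 0 (-1) 1 0) (realify S) := by
  rw [← realify_I_smul_one]
  exact ((Commute.one_left S).smul_left Complex.I).map realify

theorem exists_realify_eq_of_commute {P : Matrix (m ⊕ m) (m ⊕ m) ℝ}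
    (h : Commute (fromBlocks 0 (-1) 1 0) P) : ∃ U, realify U = P := by
  refine ⟨Matrix.of fun i j => ⟨P (.inl i) (.inl j), P (.inr i) (.inl j)⟩, ?_⟩
  ext (i | i) (j | j)
  · simp [realify_eq_fromBlocks]
  · simpa [realify_eq_fromBlocks, mul_apply, one_apply] using congr_fun₂ h.eq (.inl i) (.inl j)
  · simp [realify_eq_fromBlocks]
  · simpa [realify_eq_fromBlocks, mul_apply, one_apply] using
      (congr_fun₂ h.eq (.inl i) (.inr j)).symm

theorem continuous_realify : Continuous (realify : Matrix m m ℂ → _) := by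
  refine continuous_matrix fun i j => ?_
  rcases i with i | i <;> rcases j with j | j <;> simp only [realify_eq_fromBlocks] <;> fun_prop

theorem realify_exp (S : Matrix m m ℂ) :
    realify (NormedSpace.exp S) = NormedSpace.exp (realify S) :=
  open scoped Norms.Operator in NormedSpace.map_exp realify continuous_realify S

theorem commute_of_transpose_mul_self_eq_one {R : Type*} [CommRing R] {J P : Matrix m m R}
    (horth : Pᵀ * P = 1) (hJ : Pᵀ * J * P = J) : Commute J P :=
  calc J * P = P * (Pᵀ * J * P) := by
        rw [← Matrix.mul_assoc, ← Matrix.mul_assoc, mul_eq_one_comm.mp horth, Matrix.one_mul]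
    _ = P * J := by rw [hJ]

end Matrix

open Complex in
theorem Unitary.exists_mem_skewAdjoint_exp_eq_of_notMem_spectrum {A : Type*} [CStarAlgebra A]
    {u : A} (hu : u ∈ unitary A) {c : ℂ} (hc : ‖c‖ = 1) (hcu : c ∉ spectrum ℂ u) :
    ∃ S ∈ skewAdjoint A, NormedSpace.exp S = u := by
  have := isStarNormal_of_mem_unitary hu
  have hc₀ : c ≠ 0 := by rintro rfl; simp at hc
  have hnorm : ∀ z ∈ spectrum ℂ u, ‖-(z / c)‖ = 1 := fun z hz => by
    simp [spectrum.norm_eq_one_of_unitary hu hz, hc]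
  have hslit : ∀ z ∈ spectrum ℂ u, -(z / c) ∈ slitPlane := fun z hz => by
    refine (subset_slitPlane_iff_of_subset_sphere (r := 1) (s := {-(z / c)}) ?_).mpr ?_ rfl
    · simpa using hnorm z hz
    · intro h
      simp only [Set.mem_singleton_iff, ofReal_one, neg_inj, eq_div_iff hc₀, one_mul] at h
      exact hcu (h ▸ hz)
  -- a branch of `log` cut along the ray through `c`
  set f : ℂ → ℂ := fun z => log (-(z / c)) + log (-c)
  refine ⟨cfc f u, ?_, ?_⟩
  · rw [skewAdjoint.mem_iff, ← cfc_star, ← cfc_neg]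
    refine cfc_congr fun z hz => Complex.ext ?_ (by simp)
    have hre : (f z).re = 0 := by simp [f, log_re, hnorm z hz, hc]
    simp [hre]
  · rw [← CFC.complex_exp_eq_normedSpace_exp, ← cfc_comp' exp f u ?_ ?_]
    · conv_rhs => rw [← cfc_id' ℂ u]
      refine cfc_congr fun z hz => ?_
      simp only [f, exp_add]
      rw [exp_log (slitPlane_ne_zero (hslit z hz)), exp_log (by simp [hc₀])]
      field_simp
    · fun_prop
    · exact ContinuousOn.add (ContinuousOn.clog (by fun_prop) hslit) continuousOn_const

instance Circle.instInfinite : Infinite Circle :=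
  Circle.argEquiv.infinite_iff.mpr (Set.Ioc_infinite (by linarith [Real.pi_pos])).to_subtype

theorem Matrix.exists_mem_skewAdjoint_exp_eq_of_mem_unitary {m : Type*} [Fintype m]
    [DecidableEq m] {U : Matrix m m ℂ} (hU : U ∈ unitary (Matrix m m ℂ)) :
    ∃ S ∈ skewAdjoint (Matrix m m ℂ), NormedSpace.exp S = U := by
  obtain ⟨c, hc⟩ : ∃ c : Circle, (c : ℂ) ∉ spectrum ℂ U :=
    Set.Finite.exists_notMem (α := Circle)
      ((Matrix.finite_spectrum U).preimage Circle.coe_injective.injOn)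
  exact open scoped Matrix.Norms.L2Operator in
    Unitary.exists_mem_skewAdjoint_exp_eq_of_notMem_spectrum hU (Circle.norm_coe c) hc

open Matrix

/-- A symplectic orthogonal matrix has a logarithm that is both skew-symmetric and
infinitesimally symplectic. -/
theorem stmt1 {n : ℕ} (J P : Matrix (Fin n ⊕ Fin n) (Fin n ⊕ Fin n) ℝ)
    (hJ : J = Matrix.fromBlocks 0 (-1) 1 0)
    (hsymp : Pᵀ * J * P = J) (horth : Pᵀ * P = 1) :
    ∃ M : Matrix (Fin n ⊕ Fin n) (Fin n ⊕ Fin n) ℝ,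
      P = NormedSpace.exp M ∧ Mᵀ * J + J * M = 0 ∧ Mᵀ + M = 0 := by
  subst hJ
  obtain ⟨U, rfl⟩ :=
    exists_realify_eq_of_commute (m := Fin n) (commute_of_transpose_mul_self_eq_one horth hsymp)
  have hU : U ∈ unitary (Matrix (Fin n) (Fin n) ℂ) := by
    refine mem_unitaryGroup_iff'.mpr (realify_injective (m := Fin n) ?_)
    rwa [map_mul, map_one, star_eq_conjTranspose, ← transpose_realify]
  obtain ⟨S, hS, rfl⟩ := exists_mem_skewAdjoint_exp_eq_of_mem_unitary hU
  have hskew : (realify S)ᵀ = -realify S := by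
    rw [transpose_realify, ← star_eq_conjTranspose, skewAdjoint.mem_iff.mp hS, map_neg]
  refine ⟨realify S, realify_exp S, ?_, by rw [hskew, neg_add_cancel]⟩
  rw [hskew, Matrix.neg_mul, (commute_fromBlocks_realify S).eq, neg_add_cancel]
end

section
/- Let B be a bounded self-adjoint operator on a finite-dimensional real inner product space with B positive definite and B ≥ 2d·I for some d > 0, and let S = T − B where T is self-adjoint. Then the number of eigenvalues of S (counted with multiplicity) that are ≤ −d is at least the number of eigenvalues of T that are < d; in particular, m⁻_d(S) ≥ m⁻_d(T) + m⁰_d(T), where m⁻_d counts eigenvalues ≤ −d and m⁰_d counts eigenvalues in (−d, d). -/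
open Matrix
set_option maxHeartbeats 1000000

local notation "⟪" x ", " y "⟫" => @inner ℝ _ _ x y

private lemma quad_eq {m : ℕ} {A : Matrix (Fin m) (Fin m) ℝ} (hA : A.IsHermitian)
    (x : EuclideanSpace ℝ (Fin m)) :
    ⟪x, Matrix.toEuclideanLin A x⟫ =
      ∑ i, hA.eigenvalues i * (hA.eigenvectorBasis.repr x i) ^ 2 := by
  set u := hA.eigenvectorBasis with hu
  have hfu : ∀ i, Matrix.toEuclideanLin A (u i) = hA.eigenvalues i • u i := by
    intro i
    apply (WithLp.equiv 2 (Fin m → ℝ)).injective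
    simpa [Matrix.toEuclideanLin_apply] using hA.mulVec_eigenvectorBasis i
  conv_lhs => rw [← u.sum_repr x]
  rw [map_sum, inner_sum]
  refine Finset.sum_congr rfl fun i _ => ?_
  rw [_root_.map_smul, hfu i, inner_smul_right, inner_smul_right,
    real_inner_comm, ← u.repr_apply_apply, u.sum_repr x]
  ring

private lemma norm_sq_eq {m : ℕ} (u : OrthonormalBasis (Fin m) ℝ (EuclideanSpace ℝ (Fin m)))
    (x : EuclideanSpace ℝ (Fin m)) :
    ‖x‖ ^ 2 = ∑ i, (u.repr x i) ^ 2 := by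
  rw [← u.repr.norm_map x, EuclideanSpace.norm_eq, Real.sq_sqrt (by positivity)]
  simp [sq_abs]

private lemma mem_of_repr_ne_zero {m : ℕ} {A : Matrix (Fin m) (Fin m) ℝ} (hA : A.IsHermitian)
    {s : Set (Fin m)} {x : EuclideanSpace ℝ (Fin m)}
    (hx : x ∈ Submodule.span ℝ (⇑hA.eigenvectorBasis '' s)) {i : Fin m}
    (h : hA.eigenvectorBasis.repr x i ≠ 0) : i ∈ s := by
  have hx' : x ∈ Submodule.span ℝ (⇑hA.eigenvectorBasis.toBasis '' s) := by
    rwa [OrthonormalBasis.coe_toBasis]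
  have hsupp := (Module.Basis.mem_span_image hA.eigenvectorBasis.toBasis).1 hx'
  apply hsupp
  simp only [Finset.mem_coe, Finsupp.mem_support_iff]
  rwa [hA.eigenvectorBasis.coe_toBasis_repr_apply]

private lemma quad_ge {m : ℕ} {A : Matrix (Fin m) (Fin m) ℝ} (hA : A.IsHermitian)
    {s : Set (Fin m)} {c : ℝ} (hs : ∀ i ∈ s, c ≤ hA.eigenvalues i)
    {x : EuclideanSpace ℝ (Fin m)}
    (hx : x ∈ Submodule.span ℝ (⇑hA.eigenvectorBasis '' s)) :
    c * ‖x‖ ^ 2 ≤ ⟪x, Matrix.toEuclideanLin A x⟫ := by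
  rw [quad_eq hA, norm_sq_eq hA.eigenvectorBasis, Finset.mul_sum]
  refine Finset.sum_le_sum fun i _ => ?_
  by_cases h : hA.eigenvectorBasis.repr x i = 0
  · simp [h]
  · exact mul_le_mul_of_nonneg_right (hs i (mem_of_repr_ne_zero hA hx h)) (sq_nonneg _)

private lemma quad_lt {m : ℕ} {A : Matrix (Fin m) (Fin m) ℝ} (hA : A.IsHermitian)
    {s : Set (Fin m)} {c : ℝ} (hs : ∀ i ∈ s, hA.eigenvalues i < c)
    {x : EuclideanSpace ℝ (Fin m)}
    (hx : x ∈ Submodule.span ℝ (⇑hA.eigenvectorBasis '' s)) (hx0 : x ≠ 0) :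
    ⟪x, Matrix.toEuclideanLin A x⟫ < c * ‖x‖ ^ 2 := by
  rw [quad_eq hA, norm_sq_eq hA.eigenvectorBasis, Finset.mul_sum]
  have hex : ∃ i, hA.eigenvectorBasis.repr x i ≠ 0 := by
    by_contra hcon
    push_neg at hcon
    apply hx0
    apply hA.eigenvectorBasis.repr.injective
    ext i
    simp [hcon i]
  obtain ⟨i0, hi0⟩ := hex
  refine Finset.sum_lt_sum (fun i _ => ?_) ⟨i0, Finset.mem_univ i0, ?_⟩
  · by_cases h : hA.eigenvectorBasis.repr x i = 0
    · simp [h]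
    · exact mul_le_mul_of_nonneg_right (hs i (mem_of_repr_ne_zero hA hx h)).le (sq_nonneg _)
  · exact mul_lt_mul_of_pos_right (hs i0 (mem_of_repr_ne_zero hA hx hi0))
      (by positivity)

private lemma finrank_span_ob {m : ℕ} (u : OrthonormalBasis (Fin m) ℝ (EuclideanSpace ℝ (Fin m)))
    (s : Finset (Fin m)) :
    Module.finrank ℝ (Submodule.span ℝ (⇑u '' ↑s)) = s.card := by
  have hli : LinearIndependent ℝ (fun i : (↑s : Set (Fin m)) => u i) :=
    u.orthonormal.linearIndependent.comp _ Subtype.val_injective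
  rw [Set.image_eq_range, finrank_span_eq_card hli]
  simp

/-- If `S = T - C` with `C ≥ 2d·I` positive definite, then
`m⁻_d(S) ≥ m⁻_d(T) + m⁰_d(T)` : the number of eigenvalues of `S` that are `≤ -d`
is at least the number of eigenvalues of `T` that are `< d`. -/
theorem stmt5 {m : ℕ} (d : ℝ) (hd : 0 < d)
    (T C : Matrix (Fin m) (Fin m) ℝ)
    (hT : T.IsHermitian) (hC : C.IsHermitian)
    (hC2 : (C - (2 * d) • (1 : Matrix (Fin m) (Fin m) ℝ)).PosSemidef) :
    (Finset.univ.filter fun i => hT.eigenvalues i < d).card ≤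
      (Finset.univ.filter fun i => (hT.sub hC).eigenvalues i ≤ -d).card := by
  classical
  set hS := hT.sub hC with hhS
  set sV : Finset (Fin m) := Finset.univ.filter fun i => hT.eigenvalues i < d with hsV
  set sW : Finset (Fin m) := Finset.univ.filter fun i => -d < hS.eigenvalues i with hsW
  set V : Submodule ℝ (EuclideanSpace ℝ (Fin m)) :=
    Submodule.span ℝ (⇑hT.eigenvectorBasis '' ↑sV) with hV
  set W : Submodule ℝ (EuclideanSpace ℝ (Fin m)) :=
    Submodule.span ℝ (⇑hS.eigenvectorBasis '' ↑sW) with hW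
  -- disjointness
  have hdisj : V ⊓ W = ⊥ := by
    rw [Submodule.eq_bot_iff]
    intro x hx
    obtain ⟨hxV, hxW⟩ := Submodule.mem_inf.1 hx
    by_contra hx0
    have h1 : ⟪x, Matrix.toEuclideanLin T x⟫ < d * ‖x‖ ^ 2 :=
      quad_lt hT (fun i hi => (Finset.mem_filter.1 (Finset.mem_coe.1 hi)).2) hxV hx0
    have h2 : -d * ‖x‖ ^ 2 ≤ ⟪x, Matrix.toEuclideanLin (T - C) x⟫ :=
      quad_ge hS (fun i hi => (Finset.mem_filter.1 (Finset.mem_coe.1 hi)).2.le) hxW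
    -- bound on C
    have h3 : 2 * d * ‖x‖ ^ 2 ≤ ⟪x, Matrix.toEuclideanLin C x⟫ := by
      have h0 := hC2.dotProduct_mulVec_nonneg (WithLp.equiv 2 (Fin m → ℝ) x)
      have hself : ⟪x, x⟫ = ‖x‖ ^ 2 := real_inner_self_eq_norm_sq x
      have hstar : star (WithLp.equiv 2 (Fin m → ℝ) x) = WithLp.equiv 2 (Fin m → ℝ) x := by
        funext i; simp
      rw [hstar, Matrix.sub_mulVec, dotProduct_sub, Matrix.smul_mulVec,
        Matrix.one_mulVec, dotProduct_smul] at h0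
      have hdc : (WithLp.equiv 2 (Fin m → ℝ) x) ⬝ᵥ (C *ᵥ (WithLp.equiv 2 (Fin m → ℝ) x)) =
          ⟪x, Matrix.toEuclideanLin C x⟫ := by
        rw [EuclideanSpace.inner_eq_star_dotProduct, star_trivial, dotProduct_comm]
        rfl
      have hdd : (WithLp.equiv 2 (Fin m → ℝ) x) ⬝ᵥ (WithLp.equiv 2 (Fin m → ℝ) x) = ‖x‖ ^ 2 := by
        rw [← hself, EuclideanSpace.inner_eq_star_dotProduct, star_trivial]; rfl
      rw [hdc, smul_eq_mul, hdd] at h0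
      linarith
    have h4 : ⟪x, Matrix.toEuclideanLin (T - C) x⟫ =
        ⟪x, Matrix.toEuclideanLin T x⟫ - ⟪x, Matrix.toEuclideanLin C x⟫ := by
      rw [map_sub, LinearMap.sub_apply, inner_sub_right]
    linarith
  -- dimensions
  have hdV : Module.finrank ℝ V = sV.card := finrank_span_ob hT.eigenvectorBasis sV
  have hdW : Module.finrank ℝ W = sW.card := finrank_span_ob hS.eigenvectorBasis sW
  have hsum := Submodule.finrank_sup_add_finrank_inf_eq V W
  rw [hdisj, finrank_bot, add_zero, hdV, hdW] at hsum
  have hle : Module.finrank ℝ ↥(V ⊔ W) ≤ m :=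
    (Submodule.finrank_le _).trans_eq finrank_euclideanSpace_fin
  have hcards : sV.card + sW.card ≤ m := by omega
  have hfinal := Finset.card_filter_add_card_filter_not
    (s := (Finset.univ : Finset (Fin m))) (p := fun i => hS.eigenvalues i ≤ -d)
  have hWeq : (Finset.univ.filter fun i => ¬ hS.eigenvalues i ≤ -d) = sW := by
    simp only [hsW, not_le]
  rw [hWeq, Finset.card_univ, Fintype.card_fin] at hfinal
  omega
end
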